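/- Key entropy lemma for the S-SMDC converse: Let α ≥ 1, let S_1,…,S_α be mutually independent random variables each taking values in a finite set, let X and Y be random variables jointly distributed with them (each taking values in a finite set), and let δ ≥ 0. Suppose that H(S_1,…,S_α | X, Y) ≤ δ (near-perfect reconstruction from (X,Y)) and H(S_1,…,S_α | Y) = H(S_1,…,S_α) (perfect secrecy from Y alone). Then H(X | S_1,…,S_{α−1}, Y) ≥ H(S_α) − δ + H(X | S_1,…,S_α, Y), where for α = 1 the conditioning on S_1,…,S_{α−1} on the left-hand side is vacuous. -/

import Mathlib

open MeasureTheory ProbabilityTheory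

noncomputable def entH {Ω : Type*} [MeasurableSpace Ω] (μ : Measure Ω)
    {S : Type*} [Fintype S] (X : Ω → S) : ℝ :=
  ∑ s : S, Real.negMulLog ((μ (X ⁻¹' {s})).toReal)

noncomputable def condEntH {Ω : Type*} [MeasurableSpace Ω] (μ : Measure Ω)
    {S T : Type*} [Fintype S] [Fintype T] (X : Ω → S) (Y : Ω → T) : ℝ :=
  entH μ (fun ω => (X ω, Y ω)) - entH μ Y

def jointOn {Ω : Type*} {ι : Type*} {S : ι → Type*} (X : ∀ i, Ω → S i) (U : Finset ι) :
    Ω → ((i : U) → S i) := fun ω i => X i ω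

noncomputable def entHset {Ω : Type*} [MeasurableSpace Ω] (μ : Measure Ω)
    {ι : Type*} [DecidableEq ι] {S : ι → Type*} [∀ i, Fintype (S i)]
    (X : ∀ i, Ω → S i) (U : Finset ι) : ℝ :=
  entH μ (jointOn X U)

noncomputable def condEntHset {Ω : Type*} [MeasurableSpace Ω] (μ : Measure Ω)
    {ι : Type*} [DecidableEq ι] {S : ι → Type*} [∀ i, Fintype (S i)]
    (X : ∀ i, Ω → S i) (U A : Finset ι) : ℝ :=
  condEntH μ (jointOn X U) (jointOn X A)

/-!
Write `Z` for all the sources, `U` for the first `α - 1` of them and `V` for the last one.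
Independence gives `H(Z) = H(U) + H(V)` and secrecy gives `H(Z, Y) = H(Z) + H(Y)`, so
reconstruction yields `H(X | Z, Y) = H(Z, X, Y) - H(Z, Y) ≤ δ + H(X, Y) - H(U) - H(V) - H(Y)`.
On the other side, monotonicity and subadditivity of entropy give
`H(X | U, Y) = H(U, X, Y) - H(U, Y) ≥ H(X, Y) - H(U) - H(Y)`. Subadditivity is Gibbs'
inequality for the joint law against the product of its marginals.
-/

open Real Finset Function

namespace Real

theorem negMulLog_sum_le {ι : Type*} (s : Finset ι) {a : ι → ℝ} (ha : ∀ i ∈ s, 0 ≤ a i) :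
    negMulLog (∑ i ∈ s, a i) ≤ ∑ i ∈ s, negMulLog (a i) := by
  simp only [negMulLog_eq_neg, sum_mul, ← sum_neg_distrib]
  refine sum_le_sum fun i hi => neg_le_neg ?_
  rcases (ha i hi).eq_or_lt with h0 | hpos
  · simp [← h0]
  · exact mul_le_mul_of_nonneg_left (log_le_log hpos (single_le_sum ha hi)) hpos.le

theorem negMulLog_add_mul_log_le {p q : ℝ} (hp : 0 ≤ p) (hq : 0 ≤ q) (hpq : q = 0 → p = 0) :
    negMulLog p + p * log q ≤ q - p := by
  rcases hp.eq_or_lt with rfl | hp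
  · simpa using hq
  have hq : 0 < q := hq.lt_of_ne fun h => hp.ne' (hpq h.symm)
  have hlog := mul_le_mul_of_nonneg_left (log_le_sub_one_of_pos (div_pos hq hp)) hp.le
  rw [log_div hq.ne' hp.ne', mul_sub, mul_sub, mul_div_cancel₀ _ hp.ne'] at hlog
  rw [negMulLog]
  linarith

theorem sum_negMulLog_le_neg_sum_mul_log {ι : Type*} (s : Finset ι) {p q : ι → ℝ}
    (hp : ∀ i ∈ s, 0 ≤ p i) (hq : ∀ i ∈ s, 0 ≤ q i) (hpq : ∀ i ∈ s, q i = 0 → p i = 0)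
    (hsum : ∑ i ∈ s, q i ≤ ∑ i ∈ s, p i) :
    ∑ i ∈ s, negMulLog (p i) ≤ -∑ i ∈ s, p i * log (q i) := by
  have h := sum_le_sum fun i hi => negMulLog_add_mul_log_le (hp i hi) (hq i hi) (hpq i hi)
  rw [sum_add_distrib, sum_sub_distrib] at h
  linarith

theorem sum_negMulLog_le_sum_negMulLog_fst_add_snd {A B : Type*} [Fintype A] [Fintype B]
    {p : A × B → ℝ} (hp : ∀ c, 0 ≤ p c) (hp_sum : ∑ c, p c = 1) :
    ∑ c, negMulLog (p c) ≤
      ∑ a, negMulLog (∑ b, p (a, b)) + ∑ b, negMulLog (∑ a, p (a, b)) := by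
  have hp_le_fst : ∀ c : A × B, p c ≤ ∑ b, p (c.1, b) := fun c =>
    single_le_sum (f := fun b => p (c.1, b)) (fun b _ => hp _) (mem_univ c.2)
  have hp_le_snd : ∀ c : A × B, p c ≤ ∑ a, p (a, c.2) := fun c =>
    single_le_sum (f := fun a => p (a, c.2)) (fun a _ => hp _) (mem_univ c.1)
  have hprod_sum : ∑ c : A × B, (∑ b, p (c.1, b)) * ∑ a, p (a, c.2) = ∑ c, p c := by
    simp only [Fintype.sum_prod_type]
    rw [← sum_mul_sum, sum_comm (f := fun b a => p (a, b)), ← Fintype.sum_prod_type,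
      hp_sum, mul_one]
  have hlog : ∀ c : A × B, p c * log ((∑ b, p (c.1, b)) * ∑ a, p (a, c.2))
      = p c * log (∑ b, p (c.1, b)) + p c * log (∑ a, p (a, c.2)) := fun c => by
    rcases (hp c).eq_or_lt with h0 | hpos
    · simp [← h0]
    · rw [log_mul (hpos.trans_le (hp_le_fst c)).ne' (hpos.trans_le (hp_le_snd c)).ne', mul_add]
  have hfst : ∑ c : A × B, p c * log (∑ b, p (c.1, b)) = -∑ a, negMulLog (∑ b, p (a, b)) := by
    simp only [negMulLog_eq_neg, sum_neg_distrib, neg_neg, Fintype.sum_prod_type, ← sum_mul]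
  have hsnd : ∑ c : A × B, p c * log (∑ a, p (a, c.2)) = -∑ b, negMulLog (∑ a, p (a, b)) := by
    simp only [negMulLog_eq_neg, sum_neg_distrib, neg_neg, Fintype.sum_prod_type_right, ← sum_mul]
  calc ∑ c, negMulLog (p c)
      ≤ -∑ c : A × B, p c * log ((∑ b, p (c.1, b)) * ∑ a, p (a, c.2)) := by
        refine sum_negMulLog_le_neg_sum_mul_log _ (fun c _ => hp c)
          (fun c _ => mul_nonneg (sum_nonneg fun _ _ => hp _) (sum_nonneg fun _ _ => hp _))
          (fun c _ h => ?_) hprod_sum.le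
        rcases mul_eq_zero.1 h with h | h
        · exact le_antisymm (h ▸ hp_le_fst c) (hp c)
        · exact le_antisymm (h ▸ hp_le_snd c) (hp c)
    _ = _ := by rw [sum_congr rfl fun c _ => hlog c, sum_add_distrib, hfst, hsnd]; ring

end Real

section Entropy

variable {Ω : Type*} [MeasurableSpace Ω] (μ : Measure Ω)

theorem entH_comp_of_injective {S S' : Type*} [Fintype S] [Fintype S'] (U : Ω → S)
    {e : S → S'} (he : Injective e) :
    entH μ (fun ω => e (U ω)) = entH μ U := by
  refine (Fintype.sum_of_injective e he _ _ (fun t ht => ?_) fun s => ?_).symm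
  · have : (fun ω => e (U ω)) ⁻¹' {t} = ∅ :=
      Set.eq_empty_of_forall_notMem fun ω hω => ht ⟨U ω, hω⟩
    simp [this]
  · simp only [Set.preimage, Set.mem_singleton_iff, he.eq_iff]

theorem entH_pair_left_comm {A B C : Type*} [Fintype A] [Fintype B] [Fintype C]
    (U : Ω → A) (V : Ω → B) (W : Ω → C) :
    entH μ (fun ω => (U ω, (V ω, W ω))) = entH μ (fun ω => (V ω, (U ω, W ω))) :=
  (entH_comp_of_injective μ (fun ω => (U ω, (V ω, W ω)))
    (e := fun c => (c.2.1, (c.1, c.2.2))) fun _ _ h => by simp_all [Prod.ext_iff]).symm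

variable {S S' : Type*} [Fintype S] [MeasurableSpace S] [MeasurableSingletonClass S] {U : Ω → S}

theorem measureReal_comp_preimage_singleton [IsFiniteMeasure μ] [DecidableEq S']
    (hU : Measurable U) (g : S → S') (t : S') :
    μ.real ((fun ω => g (U ω)) ⁻¹' {t}) = ∑ s with g s = t, μ.real (U ⁻¹' {s}) := by
  rw [sum_measureReal_preimage_singleton _ fun s _ => hU (measurableSet_singleton s)]
  congr 1
  ext ω
  simp

theorem sum_measureReal_preimage_singleton_eq_one [IsProbabilityMeasure μ]
    (hU : Measurable U) : ∑ s, μ.real (U ⁻¹' {s}) = 1 := by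
  rw [sum_measureReal_preimage_singleton _ fun s _ => hU (measurableSet_singleton s),
    coe_univ, Set.preimage_univ, probReal_univ]

variable [Fintype S']

theorem entH_comp_le [IsFiniteMeasure μ] (hU : Measurable U) (g : S → S') :
    entH μ (fun ω => g (U ω)) ≤ entH μ U := by
  classical
  simp only [entH, ← measureReal_def, measureReal_comp_preimage_singleton μ hU]
  calc ∑ t, negMulLog (∑ s with g s = t, μ.real (U ⁻¹' {s}))
      ≤ ∑ t, ∑ s with g s = t, negMulLog (μ.real (U ⁻¹' {s})) :=
        sum_le_sum fun t _ => negMulLog_sum_le _ fun s _ => measureReal_nonneg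
    _ = ∑ s, negMulLog (μ.real (U ⁻¹' {s})) := sum_fiberwise _ _ _

variable [MeasurableSpace S'] [MeasurableSingletonClass S'] {V : Ω → S'} [IsProbabilityMeasure μ]

theorem entH_pair_le (hU : Measurable U) (hV : Measurable V) :
    entH μ (fun ω => (U ω, V ω)) ≤ entH μ U + entH μ V := by
  classical
  have hW : Measurable fun ω => (U ω, V ω) := hU.prodMk hV
  have hfst (a : S) :
      μ.real (U ⁻¹' {a}) = ∑ b, μ.real ((fun ω => (U ω, V ω)) ⁻¹' {(a, b)}) := by
    have hfib :
        U ⁻¹' {a} = (fun ω => (U ω, V ω)) ⁻¹' ↑(({a} : Finset S) ×ˢ (univ : Finset S')) := by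
      ext ω; simp [eq_comm]
    rw [hfib, ← sum_measureReal_preimage_singleton _ fun c _ => hW (measurableSet_singleton c),
      sum_product, sum_singleton]
  have hsnd (b : S') :
      μ.real (V ⁻¹' {b}) = ∑ a, μ.real ((fun ω => (U ω, V ω)) ⁻¹' {(a, b)}) := by
    have hfib :
        V ⁻¹' {b} = (fun ω => (U ω, V ω)) ⁻¹' ↑((univ : Finset S) ×ˢ ({b} : Finset S')) := by
      ext ω; simp [eq_comm]
    rw [hfib, ← sum_measureReal_preimage_singleton _ fun c _ => hW (measurableSet_singleton c),
      sum_product]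
    simp only [sum_singleton]
  simp only [entH, ← measureReal_def, hfst, hsnd]
  exact sum_negMulLog_le_sum_negMulLog_fst_add_snd (fun _ => measureReal_nonneg)
    (sum_measureReal_preimage_singleton_eq_one μ hW)

theorem entH_pair_of_indepFun (hU : Measurable U) (hV : Measurable V) (h : IndepFun U V μ) :
    entH μ (fun ω => (U ω, V ω)) = entH μ U + entH μ V := by
  have hfac : ∀ a b, μ.real ((fun ω => (U ω, V ω)) ⁻¹' {(a, b)})
      = μ.real (U ⁻¹' {a}) * μ.real (V ⁻¹' {b}) := fun a b => by
    have : (fun ω => (U ω, V ω)) ⁻¹' {(a, b)} = U ⁻¹' {a} ∩ V ⁻¹' {b} := by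
      ext ω; simp [Prod.ext_iff]
    rw [this, measureReal_def, h.measure_inter_preimage_eq_mul _ _ (measurableSet_singleton a)
      (measurableSet_singleton b), ENNReal.toReal_mul, measureReal_def, measureReal_def]
  simp only [entH, ← measureReal_def, Fintype.sum_prod_type, hfac, negMulLog_mul,
    sum_add_distrib, ← mul_sum, ← sum_mul, sum_measureReal_preimage_singleton_eq_one μ hU,
    sum_measureReal_preimage_singleton_eq_one μ hV, one_mul]

theorem entH_sub_add_condEntH_le_condEntH {K P L A B : Type*} [Fintype K] [Fintype L]
    [Fintype P] [MeasurableSpace P] [MeasurableSingletonClass P]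
    [Fintype A] [MeasurableSpace A] [MeasurableSingletonClass A]
    [Fintype B] [MeasurableSpace B] [MeasurableSingletonClass B]
    {Z : Ω → K} {U : Ω → P} {V : Ω → L} {X : Ω → A} {Y : Ω → B}
    (hU : Measurable U) (hX : Measurable X) (hY : Measurable Y) {δ : ℝ}
    (hZ : entH μ Z = entH μ U + entH μ V)
    (hrec : condEntH μ Z (fun ω => (X ω, Y ω)) ≤ δ)
    (hsec : condEntH μ Z Y = entH μ Z) :
    entH μ V - δ + condEntH μ X (fun ω => (Z ω, Y ω)) ≤
      condEntH μ X (fun ω => (U ω, Y ω)) := by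
  have hZXY := entH_pair_left_comm μ Z X Y
  have hXUY := entH_pair_left_comm μ X U Y
  have hXY_le : entH μ (fun ω => (X ω, Y ω)) ≤ entH μ (fun ω => (U ω, (X ω, Y ω))) :=
    entH_comp_le μ (hU.prodMk (hX.prodMk hY)) Prod.snd
  have hUY_le := entH_pair_le μ hU hY
  unfold condEntH at *
  linarith

end Entropy

section jointOn

variable {Ω ι : Type*} [MeasurableSpace Ω] (μ : Measure Ω) {T : ι → Type*}

theorem measurable_jointOn [∀ i, MeasurableSpace (T i)] {S : ∀ i, Ω → T i}
    (hS : ∀ i, Measurable (S i)) (U : Finset ι) : Measurable (jointOn S U) :=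
  measurable_pi_lambda _ fun i => hS i

variable [∀ i, Fintype (T i)] [DecidableEq ι]

theorem entH_jointOn_singleton (S : ∀ i, Ω → T i) (i : ι) :
    entH μ (jointOn S {i}) = entH μ (S i) := by
  refine (entH_comp_of_injective μ (jointOn S {i}) (e := fun f => f ⟨i, mem_singleton_self i⟩)
    fun f g h => funext fun j => ?_).symm
  obtain ⟨j, hj⟩ := j
  obtain rfl := mem_singleton.1 hj
  exact h

theorem entH_jointOn_union (S : ∀ i, Ω → T i) (V W : Finset ι) :
    entH μ (jointOn S (V ∪ W)) = entH μ (fun ω => (jointOn S V ω, jointOn S W ω)) := by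
  refine (entH_comp_of_injective μ (jointOn S (V ∪ W))
    (e := fun f => (fun i : V => f ⟨i, mem_union_left W i.2⟩,
      fun i : W => f ⟨i, mem_union_right V i.2⟩)) fun f g h => funext fun j => ?_).symm
  obtain ⟨i, hi⟩ := j
  rcases mem_union.1 hi with hV | hW
  · exact congrFun (congrArg Prod.fst h) ⟨i, hV⟩
  · exact congrFun (congrArg Prod.snd h) ⟨i, hW⟩

theorem ProbabilityTheory.iIndepFun.entH_jointOn_union [IsProbabilityMeasure μ]
    [∀ i, MeasurableSpace (T i)] [∀ i, MeasurableSingletonClass (T i)] {S : ∀ i, Ω → T i}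
    (hS : ∀ i, Measurable (S i)) (h : iIndepFun S μ) {V W : Finset ι} (hVW : Disjoint V W) :
    entH μ (jointOn S (V ∪ W)) = entH μ (jointOn S V) + entH μ (jointOn S W) := by
  rw [_root_.entH_jointOn_union, entH_pair_of_indepFun μ (measurable_jointOn hS V)
    (measurable_jointOn hS W) (h.indepFun_finset V W hVW hS)]

end jointOn

/-- Source `i : Fin α` is the paper's `S_{i+1}`: the filter `i + 1 < α` selects
`S_1, …, S_{α-1}`, and `S ⟨α - 1, _⟩` is `S_α`. -/
theorem ssmdc_key_entropy_lemma
    {Ω : Type*} [MeasurableSpace Ω] (μ : Measure Ω) [IsProbabilityMeasure μ]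
    {α : ℕ} (hα : 1 ≤ α)
    {T : Fin α → Type*} [∀ i, Fintype (T i)] [∀ i, MeasurableSpace (T i)]
    [∀ i, MeasurableSingletonClass (T i)]
    {A B : Type*} [Fintype A] [MeasurableSpace A] [MeasurableSingletonClass A]
    [Fintype B] [MeasurableSpace B] [MeasurableSingletonClass B]
    (S : ∀ i, Ω → T i) (hS : ∀ i, Measurable (S i))
    (hindep : iIndepFun S μ)
    (X : Ω → A) (hX : Measurable X) (Y : Ω → B) (hY : Measurable Y)
    (δ : ℝ)
    (hrec : condEntH μ (jointOn S Finset.univ) (fun ω => (X ω, Y ω)) ≤ δ)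
    (hsec : condEntH μ (jointOn S Finset.univ) Y = entH μ (jointOn S Finset.univ)) :
    condEntH μ X
        (fun ω => (jointOn S (Finset.univ.filter (fun i : Fin α => (i : ℕ) + 1 < α)) ω, Y ω)) ≥
      entH μ (S ⟨α - 1, by omega⟩) - δ +
        condEntH μ X (fun ω => (jointOn S Finset.univ ω, Y ω)) := by
  have hsplit : univ = univ.filter (fun i : Fin α => (i : ℕ) + 1 < α) ∪ {⟨α - 1, by omega⟩} := by
    ext i
    simp only [mem_univ, mem_union, mem_filter, true_and, mem_singleton, Fin.ext_iff, true_iff]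
    omega
  have hdisj : Disjoint (univ.filter fun i : Fin α => (i : ℕ) + 1 < α) {⟨α - 1, by omega⟩} := by
    simp only [disjoint_singleton_right, mem_filter, mem_univ, true_and]
    omega
  have hsources := hindep.entH_jointOn_union μ hS hdisj
  rw [← hsplit, entH_jointOn_singleton] at hsources
  exact entH_sub_add_condEntH_le_condEntH μ (measurable_jointOn hS _) hX hY hsources hrec hsec
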